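/- For any relatively prime positive integers p and q with p ≥ q, there exists a unique sequence of positive integers a₁,…,a_k with a_i ≥ 2 for all i whenever k > 1 (and a₁ ≥ 1 arbitrary when k = 1) such that p/q equals the negative continued fraction a₁ - 1/(a₂ - 1/(a₃ - ⋯ - 1/a_k)). -/

import Mathlib

/-!
Existence is Euclid's algorithm with rounding up: if `q < p` and `q ∤ p`, write `p = a q - r`
with `a = ⌊p/q⌋ + 1 ≥ 2` and `0 < r < q`; then `p/q = a - 1/(q/r)`, and `q/r` is expanded
recursively.
Uniqueness: a nonempty expansion with entries `≥ 2` has value `> 1`, so the value of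
`a :: l` lies in `(a - 1, a]` and its first entry is recovered as the ceiling of the value.
-/

/-- The negative (Hirzebruch–Jung) continued fraction
`[a₁, …, a_k]⁻ = a₁ - 1/(a₂ - 1/(⋯ - 1/a_k))`, as a rational number.
Note that in `ℚ` we have `1/0 = 0`, so `ncf [a] = a`. -/
def ncf : List ℤ → ℚ
  | [] => 0
  | a :: l => (a : ℚ) - 1 / ncf l

theorem ncf_cons (a : ℤ) (l : List ℤ) : ncf (a :: l) = a - 1 / ncf l := rfl

theorem one_lt_ncf {l : List ℤ} (hne : l ≠ []) (h2 : ∀ x ∈ l, 2 ≤ x) : 1 < ncf l := by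
  induction l with
  | nil => exact absurd rfl hne
  | cons a t ih =>
    have ha : (2 : ℚ) ≤ a := by exact_mod_cast h2 a List.mem_cons_self
    have ht : 0 ≤ 1 / ncf t ∧ 1 / ncf t < 1 := by
      rcases eq_or_ne t [] with rfl | ht
      · simp [ncf]
      · have := ih ht fun x hx => h2 x (List.mem_cons_of_mem _ hx)
        exact ⟨by positivity, (div_lt_one (by linarith)).mpr this⟩
    rw [ncf_cons]
    linarith [ht.2]

theorem ceil_ncf_cons {a : ℤ} {l : List ℤ} (h2 : ∀ x ∈ l, 2 ≤ x) : ⌈ncf (a :: l)⌉ = a := by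
  have hl : 0 ≤ 1 / ncf l ∧ 1 / ncf l < 1 := by
    rcases eq_or_ne l [] with rfl | hne
    · simp [ncf]
    · have := one_lt_ncf hne h2
      exact ⟨by positivity, (div_lt_one (by linarith)).mpr this⟩
  rw [Int.ceil_eq_iff, ncf_cons]
  constructor <;> linarith [hl.1, hl.2]

theorem ncf_injOn : Set.InjOn ncf {l | ∀ x ∈ l, 2 ≤ x} := by
  intro a ha b hb hab
  induction a generalizing b with
  | nil =>
    rcases b with _ | ⟨y, t⟩
    · rfl
    · linarith [one_lt_ncf (List.cons_ne_nil y t) hb, show ncf [] = 0 from rfl]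
  | cons x s ih =>
    rcases b with _ | ⟨y, t⟩
    · linarith [one_lt_ncf (List.cons_ne_nil x s) ha, show ncf [] = 0 from rfl]
    · have hs : ∀ z ∈ s, 2 ≤ z := fun z hz => ha z (List.mem_cons_of_mem _ hz)
      have ht : ∀ z ∈ t, 2 ≤ z := fun z hz => hb z (List.mem_cons_of_mem _ hz)
      have hxy : x = y := by rw [← ceil_ncf_cons (a := x) hs, hab, ceil_ncf_cons ht]
      subst hxy
      have hst : ncf s = ncf t := by
        rw [ncf_cons, ncf_cons, sub_right_inj, one_div, one_div, inv_inj] at hab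
        exact hab
      rw [ih hs ht hst]

theorem exists_ncf_eq_div_of_lt {p q : ℕ} (hq : 0 < q) (hqp : q < p) :
    ∃ a : List ℤ, a ≠ [] ∧ (∀ x ∈ a, 2 ≤ x) ∧ ncf a = p / q := by
  induction q using Nat.strong_induction_on generalizing p with
  | _ q ih =>
  by_cases hdvd : q ∣ p
  · obtain ⟨n, rfl⟩ := hdvd
    have hn : 2 ≤ n := by nlinarith
    refine ⟨[(n : ℤ)], List.cons_ne_nil _ _, by simpa using hn, ?_⟩
    have : (q : ℚ) ≠ 0 := by positivity
    simp [ncf, this]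
  · have hmod : 0 < p % q := Nat.pos_of_ne_zero fun h => hdvd (Nat.dvd_of_mod_eq_zero h)
    have hmod_lt : p % q < q := Nat.mod_lt p hq
    obtain ⟨r, hr⟩ : ∃ r, p % q + r = q := ⟨q - p % q, by omega⟩
    have hr0 : 0 < r := by omega
    obtain ⟨l, hne, h2, hval⟩ := ih r (by omega) (p := q) hr0 (by omega)
    have hdiv : 1 ≤ p / q := Nat.div_pos hqp.le hq
    have hpq : q * (p / q) + p % q = p := Nat.div_add_mod p q
    generalize p / q = m at hdiv hpq ⊢
    refine ⟨((m + 1 : ℕ) : ℤ) :: l, List.cons_ne_nil _ _, ?_, ?_⟩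
    · intro x hx
      rcases List.mem_cons.mp hx with rfl | hx
      · omega
      · exact h2 x hx
    · have hpq' : (q : ℚ) * m + (p % q : ℕ) = p := by exact_mod_cast hpq
      have hr' : ((p % q : ℕ) : ℚ) + r = q := by exact_mod_cast hr
      have : (q : ℚ) ≠ 0 := by positivity
      have : (r : ℚ) ≠ 0 := by positivity
      rw [ncf_cons, hval]
      push_cast
      field_simp
      linarith

def NcfAdmissible (a : List ℤ) : Prop :=
  a = [1] ∨ a ≠ [] ∧ ∀ x ∈ a, 2 ≤ x

theorem ncfAdmissible_iff {a : List ℤ} :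
    NcfAdmissible a ↔ a ≠ [] ∧ (∀ x ∈ a, 1 ≤ x) ∧ (1 < a.length → ∀ x ∈ a, 2 ≤ x) := by
  constructor
  · rintro (rfl | ⟨hne, h2⟩)
    · simp
    · exact ⟨hne, fun x hx => by linarith [h2 x hx], fun _ => h2⟩
  · rintro ⟨hne, h1, h2⟩
    rcases a with _ | ⟨x, _ | ⟨y, t⟩⟩
    · exact absurd rfl hne
    · rcases (h1 x List.mem_cons_self).eq_or_lt with rfl | hx
      · exact Or.inl rfl
      · exact Or.inr ⟨hne, by simpa using Int.add_one_le_of_lt hx⟩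
    · exact Or.inr ⟨hne, h2 (by simp)⟩

theorem NcfAdmissible.ncf_drop_ne_zero {a : List ℤ} (ha : NcfAdmissible a) :
    ∀ i < a.length, ncf (a.drop i) ≠ 0 := by
  intro i hi
  rcases ha with rfl | ⟨-, h2⟩
  · obtain rfl : i = 0 := by simpa using hi
    simp [ncf]
  · have hne : a.drop i ≠ [] := by simpa [List.drop_eq_nil_iff] using hi
    exact (one_pos.trans (one_lt_ncf hne fun x hx => h2 x (List.mem_of_mem_drop hx))).ne'

theorem ncf_injOn_ncfAdmissible : Set.InjOn ncf {a | NcfAdmissible a} := by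
  have key : ∀ {b : List ℤ}, b ≠ [] → (∀ x ∈ b, 2 ≤ x) → ncf [1] ≠ ncf b := fun hne h2 =>
    (show ncf [1] = 1 by simp [ncf]) ▸ (one_lt_ncf hne h2).ne
  rintro a (rfl | ⟨ha, ha2⟩) b (rfl | ⟨hb, hb2⟩) hab
  · rfl
  · exact absurd hab (key hb hb2)
  · exact absurd hab.symm (key ha ha2)
  · exact ncf_injOn ha2 hb2 hab

theorem exists_ncfAdmissible_ncf_eq_div {p q : ℕ} (hq : 0 < q) (hqp : q ≤ p) :
    ∃ a, NcfAdmissible a ∧ ncf a = p / q := by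
  rcases hqp.eq_or_lt with rfl | hlt
  · exact ⟨[1], Or.inl rfl, by simp [ncf, hq.ne']⟩
  · obtain ⟨a, hne, h2, hval⟩ := exists_ncf_eq_div_of_lt hq hlt
    exact ⟨a, Or.inr ⟨hne, h2⟩, hval⟩

theorem stmt0_general (p q : ℕ) (hq : 0 < q) (hqp : q ≤ p) :
    ∃! a : List ℤ, a ≠ [] ∧ (∀ x ∈ a, 1 ≤ x) ∧
      (1 < a.length → ∀ x ∈ a, 2 ≤ x) ∧
      (∀ i, i < a.length → ncf (a.drop i) ≠ 0) ∧
      (p : ℚ) / (q : ℚ) = ncf a := by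
  obtain ⟨a, ha, hval⟩ := exists_ncfAdmissible_ncf_eq_div hq hqp
  obtain ⟨hne, h1, h2⟩ := ncfAdmissible_iff.mp ha
  refine ⟨a, ⟨hne, h1, h2, ha.ncf_drop_ne_zero, hval.symm⟩, ?_⟩
  rintro b ⟨hbne, hb1, hb2, -, hbval⟩
  exact ncf_injOn_ncfAdmissible (ncfAdmissible_iff.mpr ⟨hbne, hb1, hb2⟩) ha (hbval ▸ hval).symm

/-- For any relatively prime positive integers `p ≥ q` there is a unique sequence of
positive integers `a₁, …, a_k` (with all `aᵢ ≥ 2` when `k > 1`) whose negative continued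
fraction equals `p/q`, and all intermediate denominators are nonzero. -/
theorem stmt0 (p q : ℕ) (hp : 0 < p) (hq : 0 < q) (hqp : q ≤ p)
    (hcop : Nat.Coprime p q) :
    ∃! a : List ℤ, a ≠ [] ∧ (∀ x ∈ a, 1 ≤ x) ∧
      (1 < a.length → ∀ x ∈ a, 2 ≤ x) ∧
      (∀ i, i < a.length → ncf (a.drop i) ≠ 0) ∧
      (p : ℚ) / (q : ℚ) = ncf a :=
  stmt0_general p q hq hqp
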